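/- With H = FreeAlgebra k ℕ+ and Δ, ε, δ_n as in the context: for every n ≥ 1, δ_n(a_n) = n! · (a_1 ⊗ a_1 ⊗ ⋯ ⊗ a_1) (n tensor factors) in H^{⊗n}. In particular δ_n(a_n) ≠ 0, while δ_ℓ(a_n) = 0 for every ℓ > n. -/

import Mathlib

open scoped TensorProduct
noncomputable section

universe u
variable (k : Type u) [Field k] [CharZero k]

/-- `H = FreeAlgebra k ℕ+`, the free associative `k`-algebra on `a_1, a_2, a_3, …`. -/
abbrev HA := FreeAlgebra k ℕ+

/-- The generator `a_n` for `n : ℕ+`. -/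
def ag (n : ℕ+) : HA k := FreeAlgebra.ι k n

/-- The generator `a_n` for `n : ℕ` with `n ≥ 1` (and `1` for `n = 0`, never used). -/
def ag' (n : ℕ) : HA k := if h : 0 < n then ag k ⟨n, h⟩ else 1

/-- `P_t^{(s)}(a_*) := Σ_{j_1+⋯+j_s = t, j_i ≥ 1} a_{j_1}⋯a_{j_s}`. -/
def Pha (t s : ℕ) : HA k :=
  ∑ c ∈ Finset.univ.filter (fun c : Composition t => c.length = s),
    (c.blocks.map (ag' k)).prod

/-- `Q_t^ℓ(a_*) := Σ_{s=1}^{t} binom(ℓ+1, s)·P_t^{(s)}(a_*)`. -/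
def Qha (t l : ℕ) : HA k := ∑ s ∈ Finset.Icc 1 t, (l + 1).choose s • Pha k t s

/-- The coproduct `Δ : H → H ⊗ H`, the unique `k`-algebra homomorphism with
`Δ(a_n) = a_n⊗1 + 1⊗a_n + Σ_{m=1}^{n−1} a_m ⊗ Q^m_{n−m}(a_*)`. -/
def Dha : HA k →ₐ[k] (HA k ⊗[k] HA k) :=
  FreeAlgebra.lift k fun n : ℕ+ =>
    ag k n ⊗ₜ[k] 1 + 1 ⊗ₜ[k] ag k n +
      ∑ m ∈ Finset.Icc 1 ((n : ℕ) - 1), ag' k m ⊗ₜ[k] Qha k ((n : ℕ) - m) m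

/-- The counit `ε : H → k`, the `k`-algebra homomorphism with `ε(a_n) = 0`. -/
def Eha : HA k →ₐ[k] k := FreeAlgebra.lift k fun _ : ℕ+ => 0

/-- The `n`-fold tensor power `H^{⊗n}` over `k` (with `H^{⊗0} = k`). -/
def TpowH : ℕ → ModuleCat k
  | 0 => ModuleCat.of k k
  | n+1 => ModuleCat.of k (HA k ⊗[k] (TpowH n))

/-- The iterated coproducts `Δ^n : H → H^{⊗n}`, with `Δ^0 := ε`. -/
def DeltaH : (n : ℕ) → (HA k →ₗ[k] TpowH k n)
  | 0 => (Eha k).toLinearMap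
  | n+1 => (TensorProduct.map LinearMap.id (DeltaH n)) ∘ₗ (Dha k).toLinearMap

/-- `id - u ∘ ε : H → H`. -/
def projH : HA k →ₗ[k] HA k :=
  LinearMap.id - (Algebra.linearMap k (HA k)) ∘ₗ (Eha k).toLinearMap

/-- `(id - u∘ε)^{⊗n}`. -/
def projPowH : (n : ℕ) → (TpowH k n →ₗ[k] TpowH k n)
  | 0 => LinearMap.id
  | n+1 => TensorProduct.map (projH k) (projPowH n)

/-- Drinfeld's maps `δ_n := (id - u∘ε)^{⊗n} ∘ Δ^n : H → H^{⊗n}` (`δ_0 = ε`). -/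
def deltaH (n : ℕ) : HA k →ₗ[k] TpowH k n := projPowH k n ∘ₗ DeltaH k n

/-- The element `a_1 ⊗ a_1 ⊗ ⋯ ⊗ a_1` (`n` tensor factors) of `H^{⊗n}`. -/
def a1pow : (n : ℕ) → TpowH k n
  | 0 => (1 : k)
  | n+1 => ag k 1 ⊗ₜ[k] a1pow n


set_option linter.unusedSectionVars false
set_option maxHeartbeats 3000000

/-! ### Auxiliary machinery -/

/-- The algebra map sending every generator to `1` (sum-of-coefficients functional). -/
def Sfun : HA k →ₐ[k] k := FreeAlgebra.lift k fun _ => 1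

lemma Sfun_ag (n : ℕ+) : Sfun k (ag k n) = 1 := FreeAlgebra.lift_ι_apply _ _

lemma Sfun_ag' (n : ℕ) : Sfun k (ag' k n) = 1 := by
  unfold ag'; split
  · exact Sfun_ag k _
  · exact map_one _

lemma ag'_coe (n : ℕ+) : ag' k (n : ℕ) = ag k n := by
  unfold ag'; rw [dif_pos n.pos]; congr 1

/-- Words of weight `t`. -/
def Wset (t : ℕ) : Set (HA k) :=
  {x | ∃ L : List ℕ, L.sum = t ∧ (∀ i ∈ L, 0 < i) ∧ (L.map (ag' k)).prod = x}

/-- Homogeneous component of degree `t`. -/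
def Hdeg (t : ℕ) : Submodule k (HA k) := Submodule.span k (Wset k t)

lemma ag'_mem_W {m : ℕ} (hm : 0 < m) : ag' k m ∈ Wset k m :=
  ⟨[m], by simp, by simpa using hm, by simp⟩

lemma one_mem_W : (1 : HA k) ∈ Wset k 0 := ⟨[], by simp, by simp, by simp⟩

lemma ag_mem_W (n : ℕ+) : ag k n ∈ Wset k n := by
  have := ag'_mem_W k n.pos
  rwa [ag'_coe] at this

lemma W_mul {a b : ℕ} {x y : HA k} (hx : x ∈ Wset k a) (hy : y ∈ Wset k b) :
    x * y ∈ Wset k (a + b) := by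
  obtain ⟨L, hLs, hLp, rfl⟩ := hx
  obtain ⟨M, hMs, hMp, rfl⟩ := hy
  refine ⟨L ++ M, by simp [hLs, hMs], ?_, by simp⟩
  intro i hi
  rcases List.mem_append.1 hi with h | h
  exacts [hLp i h, hMp i h]

lemma Hdeg_mul {a b : ℕ} {x y : HA k} (hx : x ∈ Hdeg k a) (hy : y ∈ Hdeg k b) :
    x * y ∈ Hdeg k (a + b) := by
  induction hx using Submodule.span_induction with
  | mem u hu =>
    induction hy using Submodule.span_induction with
    | mem v hv => exact Submodule.subset_span (W_mul k hu hv)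
    | zero => simp
    | add v w _ _ h1 h2 => rw [mul_add]; exact add_mem h1 h2
    | smul c v _ h1 => rw [mul_smul_comm]; exact Submodule.smul_mem _ _ h1
  | zero => simp
  | add u v _ _ h1 h2 => rw [add_mul]; exact add_mem h1 h2
  | smul c u _ h1 => rw [smul_mul_assoc]; exact Submodule.smul_mem _ _ h1

lemma Sfun_word {t : ℕ} {x : HA k} (hx : x ∈ Wset k t) : Sfun k x = 1 := by
  obtain ⟨L, _, _, rfl⟩ := hx
  rw [map_list_prod]
  apply List.prod_eq_one
  intro y hy
  simp only [List.map_map, List.mem_map] at hy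
  obtain ⟨i, _, rfl⟩ := hy
  exact Sfun_ag' k i

lemma Hdeg_zero_eha_eq_sfun {x : HA k} (hx : x ∈ Hdeg k 0) : Eha k x = Sfun k x := by
  induction hx using Submodule.span_induction with
  | mem u hu =>
    obtain ⟨L, hLs, hLp, rfl⟩ := hu
    have : L = [] := by
      cases L with
      | nil => rfl
      | cons a as =>
        have := hLp a (by simp)
        simp at hLs; omega
    subst this; simp
  | zero => simp
  | add u v _ _ h1 h2 => simp [h1, h2]
  | smul c u _ h1 => simp [h1]

/-- Bihomogeneous elements of bidegree summing to `t` with left degree at least `c`. -/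
def ZZg (c t : ℕ) : Submodule k (HA k ⊗[k] HA k) :=
  Submodule.span k
    {u | ∃ (d e : ℕ) (a b : HA k),
      d + e = t ∧ c ≤ d ∧ a ∈ Hdeg k d ∧ b ∈ Hdeg k e ∧ u = a ⊗ₜ[k] b}

lemma tmul_mem_ZZg {c d e : ℕ} {a b : HA k} (ha : a ∈ Hdeg k d) (hb : b ∈ Hdeg k e)
    (hc : c ≤ d) : a ⊗ₜ[k] b ∈ ZZg k c (d + e) := by
  unfold ZZg
  exact Submodule.subset_span ⟨d, e, a, b, rfl, hc, ha, hb, rfl⟩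

lemma ZZg_mono {c c' t : ℕ} (h : c ≤ c') : ZZg k c' t ≤ ZZg k c t := by
  unfold ZZg
  apply Submodule.span_mono
  rintro u ⟨d, e, a, b, hde, hc, ha, hb, rfl⟩
  exact ⟨d, e, a, b, hde, le_trans h hc, ha, hb, rfl⟩

lemma ZZg_mul {c c' s t : ℕ} {u v : HA k ⊗[k] HA k} (hu : u ∈ ZZg k c s)
    (hv : v ∈ ZZg k c' t) : u * v ∈ ZZg k (c + c') (s + t) := by
  unfold ZZg at hu hv
  induction hu using Submodule.span_induction with
  | mem u hu =>
    induction hv using Submodule.span_induction with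
    | mem v hv =>
      obtain ⟨d, e, a, b, hde, hc, ha, hb, rfl⟩ := hu
      obtain ⟨d', e', a', b', hde', hc', ha', hb', rfl⟩ := hv
      rw [Algebra.TensorProduct.tmul_mul_tmul]
      have := tmul_mem_ZZg k (Hdeg_mul k ha ha') (Hdeg_mul k hb hb') (c := c + c')
        (Nat.add_le_add hc hc')
      have heq : (d + d') + (e + e') = s + t := by omega
      rwa [heq] at this
    | zero => simp
    | add v w _ _ h1 h2 => rw [mul_add]; exact add_mem h1 h2
    | smul r v _ h1 => rw [mul_smul_comm]; exact Submodule.smul_mem _ _ h1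
  | zero => simp
  | add u w _ _ h1 h2 => rw [add_mul]; exact add_mem h1 h2
  | smul r u _ h1 => rw [smul_mul_assoc]; exact Submodule.smul_mem _ _ h1

lemma Pha_mem (t s : ℕ) : Pha k t s ∈ Hdeg k t := by
  apply Submodule.sum_mem
  intro c _
  exact Submodule.subset_span ⟨c.blocks, c.blocks_sum, fun i hi => c.blocks_pos hi, rfl⟩

lemma Qha_mem (t l : ℕ) : Qha k t l ∈ Hdeg k t :=
  Submodule.sum_mem _ fun s _ => Submodule.smul_of_tower_mem _ _ (Pha_mem k t s)

lemma Sfun_Pha (t s : ℕ) :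
    Sfun k (Pha k t s) =
      ((Finset.univ.filter (fun c : Composition t => c.length = s)).card : k) := by
  unfold Pha
  rw [map_sum]
  rw [Finset.sum_congr rfl (fun c _ => ?_), Finset.sum_const, nsmul_eq_mul, mul_one]
  rw [map_list_prod]
  apply List.prod_eq_one
  intro y hy
  simp only [List.map_map, List.mem_map] at hy
  obtain ⟨i, _, rfl⟩ := hy
  exact Sfun_ag' k i

lemma card_comp_one {t : ℕ} (ht : 1 ≤ t) :
    (Finset.univ.filter (fun c : Composition t => c.length = 1)).card = 1 := by
  rw [Finset.card_eq_one]
  refine ⟨Composition.single t ht, ?_⟩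
  ext c
  simp [Composition.eq_single_iff_length ht]

lemma card_comp_two (t : ℕ) :
    (Finset.univ.filter (fun c : Composition t => c.length = 2)).card = t - 1 := by
  rw [← Nat.card_Ico 1 t]
  refine Finset.card_bij' (fun c _ => c.blocks.headI)
    (fun i hi => ⟨[i, t - i], by
        intro x hx
        simp only [Finset.mem_Ico] at hi
        simp only [List.mem_cons, List.not_mem_nil, or_false] at hx
        rcases hx with rfl | rfl <;> omega, by
        simp only [Finset.mem_Ico] at hi
        simp; omega⟩) ?_ ?_ ?_ ?_
  · intro c hc
    simp only [Finset.mem_filter, Finset.mem_univ, true_and] at hc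
    have h2 : c.blocks.length = 2 := hc
    obtain ⟨a, b, hab⟩ := List.length_eq_two.1 h2
    have ha : 0 < a := c.blocks_pos (by rw [hab]; simp)
    have hb : 0 < b := c.blocks_pos (by rw [hab]; simp)
    have hs : a + b = t := by have := c.blocks_sum; rw [hab] at this; simpa using this
    show c.blocks.headI ∈ Finset.Ico 1 t
    rw [hab]
    simp only [List.headI, Finset.mem_Ico]
    omega
  · intro i hi
    simp only [Finset.mem_filter, Finset.mem_univ, true_and]
    rfl
  · intro c hc
    simp only [Finset.mem_filter, Finset.mem_univ, true_and] at hc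
    have h2 : c.blocks.length = 2 := hc
    obtain ⟨a, b, hab⟩ := List.length_eq_two.1 h2
    have hs : a + b = t := by have := c.blocks_sum; rw [hab] at this; simpa using this
    have hb : 0 < b := c.blocks_pos (by rw [hab]; simp)
    apply Composition.ext
    show [c.blocks.headI, t - c.blocks.headI] = c.blocks
    rw [hab]
    simp only [List.headI]
    have hba : t - a = b := by omega
    rw [hba]
  · intro i hi
    rfl

lemma Sfun_Q1 {t : ℕ} (ht : 1 ≤ t) : Sfun k (Qha k t 1) = (t : k) + 1 := by
  unfold Qha
  rw [map_sum]
  have hterm : ∀ s ∈ Finset.Icc 1 t, Sfun k ((1 + 1).choose s • Pha k t s)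
      = ((2 : ℕ).choose s : k) *
        ((Finset.univ.filter (fun c : Composition t => c.length = s)).card : k) := by
    intro s _
    rw [map_nsmul, nsmul_eq_mul, Sfun_Pha]
  rw [Finset.sum_congr rfl hterm]
  rcases eq_or_lt_of_le ht with h1 | h2
  · rw [← h1]
    rw [Finset.Icc_self, Finset.sum_singleton, card_comp_one (le_refl 1)]
    norm_num
  · have hsub : Finset.Icc 1 2 ⊆ Finset.Icc 1 t := by
      intro s hs; simp only [Finset.mem_Icc] at *; omega
    rw [← Finset.sum_subset hsub]
    · have h12 : Finset.Icc 1 2 = {1, 2} := rfl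
      rw [h12]
      rw [Finset.sum_insert (by decide), Finset.sum_singleton]
      rw [card_comp_one ht, card_comp_two]
      have : ((t - 1 : ℕ) : k) = (t : k) - 1 := by
        rw [Nat.cast_sub ht]; norm_num
      rw [this]
      norm_num
      ring
    · intro s hs hs2
      simp only [Finset.mem_Icc] at hs hs2
      have : (2).choose s = 0 := Nat.choose_eq_zero_of_lt (by omega)
      rw [this]
      norm_num

lemma Dha_apply_ag (n : ℕ+) : Dha k (ag k n) =
    ag k n ⊗ₜ[k] 1 + 1 ⊗ₜ[k] ag k n +
      ∑ m ∈ Finset.Icc 1 ((n : ℕ) - 1), ag' k m ⊗ₜ[k] Qha k ((n : ℕ) - m) m := by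
  unfold Dha ag
  rw [FreeAlgebra.lift_ι_apply]

lemma Dha_ag (n : ℕ+) : ∃ (q : HA k) (z : HA k ⊗[k] HA k),
    q ∈ Hdeg k ((n : ℕ) - 1) ∧ Sfun k q = ((n : ℕ) : k) ∧ z ∈ ZZg k 2 (n : ℕ) ∧
    Dha k (ag k n) = 1 ⊗ₜ[k] ag k n + ag k 1 ⊗ₜ[k] q + z := by
  rcases Nat.lt_or_ge (n : ℕ) 2 with h1 | h2
  · have hn : (n : ℕ) = 1 := by have := n.pos; omega
    have hn' : n = 1 := by
      apply PNat.coe_inj.1; rw [hn]; rfl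
    refine ⟨1, 0, ?_, ?_, zero_mem _, ?_⟩
    · rw [hn]
      exact Submodule.subset_span (one_mem_W k)
    · rw [hn]; simp
    · rw [Dha_apply_ag, hn, hn']
      rw [show Finset.Icc 1 (1 - 1) = (∅ : Finset ℕ) from rfl, Finset.sum_empty]
      abel
  · have h1le : 1 ≤ (n : ℕ) - 1 := by omega
    refine ⟨Qha k ((n : ℕ) - 1) 1,
      ag k n ⊗ₜ[k] 1 + ∑ m ∈ Finset.Icc 2 ((n : ℕ) - 1),
        ag' k m ⊗ₜ[k] Qha k ((n : ℕ) - m) m, Qha_mem k _ _, ?_, ?_, ?_⟩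
    · rw [Sfun_Q1 k h1le, Nat.cast_sub (by omega : 1 ≤ (n : ℕ))]
      ring
    · apply add_mem
      · have := tmul_mem_ZZg k (Submodule.subset_span (ag_mem_W k n))
          (Submodule.subset_span (one_mem_W k)) h2
        simpa using this
      · apply Submodule.sum_mem
        intro m hm
        simp only [Finset.mem_Icc] at hm
        have := tmul_mem_ZZg k (Submodule.subset_span (ag'_mem_W k (by omega : 0 < m)))
          (Qha_mem k ((n : ℕ) - m) m) hm.1
        have heq : m + ((n : ℕ) - m) = (n : ℕ) := by omega
        rwa [heq] at this
    · rw [Dha_apply_ag]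
      have hins : Finset.Icc 1 ((n : ℕ) - 1) = insert 1 (Finset.Icc 2 ((n : ℕ) - 1)) := by
        ext x
        simp only [Finset.mem_Icc, Finset.mem_insert]
        omega
      rw [hins, Finset.sum_insert (by simp)]
      have hag1 : ag' k 1 = ag k 1 := by
        have := ag'_coe k 1
        simpa using this
      rw [hag1]
      abel

lemma Hdeg_ag1 : ag k 1 ∈ Hdeg k 1 := Submodule.subset_span (ag_mem_W k 1)

lemma Dha_split : ∀ (L : List ℕ), (∀ i ∈ L, 0 < i) →
    ∃ (y : HA k) (z : HA k ⊗[k] HA k),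
      y ∈ Hdeg k (L.sum - 1) ∧ Sfun k y = (L.sum : k) ∧ (L.sum = 0 → y = 0) ∧
      ag k 1 ⊗ₜ[k] y ∈ ZZg k 1 L.sum ∧ z ∈ ZZg k 2 L.sum ∧
      Dha k ((L.map (ag' k)).prod) =
        1 ⊗ₜ[k] (L.map (ag' k)).prod + ag k 1 ⊗ₜ[k] y + z := by
  intro L
  induction L with
  | nil =>
    intro _
    refine ⟨0, 0, zero_mem _, by simp, fun _ => rfl, by simp, zero_mem _, ?_⟩
    simp only [List.map_nil, List.prod_nil, List.sum_nil, map_one]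
    rw [Algebra.TensorProduct.one_def]
    simp
  | cons j L ih =>
    intro hp
    have hj : 0 < j := hp j (by simp)
    have hLp : ∀ i ∈ L, 0 < i := fun i hi => hp i (by simp [hi])
    set n : ℕ+ := ⟨j, hj⟩ with hn
    have hnj : ((n : ℕ)) = j := rfl
    obtain ⟨y', z', hy', hSy', hy0', hty', hz', heq'⟩ := ih hLp
    obtain ⟨q, zq, hq, hSq, hzq, heqq⟩ := Dha_ag k n
    rw [hnj] at hq hSq hzq
    have hagj : ag' k j = ag k n := by unfold ag'; rw [dif_pos hj]
    have hw' : (L.map (ag' k)).prod ∈ Hdeg k L.sum :=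
      Submodule.subset_span ⟨L, rfl, hLp, rfl⟩
    set w' : HA k := (L.map (ag' k)).prod with hw'def
    set t' : ℕ := L.sum with ht'def
    have hsum : (j :: L).sum = j + t' := by simp [ht'def]
    have hprod : ((j :: L).map (ag' k)).prod = ag k n * w' := by
      simp [hagj, hw'def]
    refine ⟨ag k n * y' + q * w',
      (1 ⊗ₜ[k] ag k n) * z' + (ag k 1 ⊗ₜ[k] q) * (ag k 1 ⊗ₜ[k] y')
        + (ag k 1 ⊗ₜ[k] q) * z'
        + zq * (1 ⊗ₜ[k] w' + ag k 1 ⊗ₜ[k] y' + z'), ?_, ?_, ?_, ?_, ?_, ?_⟩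
    · -- y ∈ Hdeg ((j::L).sum - 1)
      rw [hsum]
      apply add_mem
      · rcases Nat.eq_zero_or_pos t' with h0 | hpos
        · rw [hy0' h0]; simp
        · have := Hdeg_mul k (Submodule.subset_span (ag_mem_W k n)) hy'
          have heq2 : (n : ℕ) + (t' - 1) = j + t' - 1 := by omega
          rwa [heq2] at this
      · have := Hdeg_mul k hq hw'
        have heq2 : (j - 1) + t' = j + t' - 1 := by omega
        rwa [heq2] at this
    · rw [map_add, map_mul, map_mul, Sfun_ag, hSq, hSy', Sfun_word k ⟨L, rfl, hLp, rfl⟩,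
        hsum]
      push_cast
      ring
    · intro h
      rw [hsum] at h
      omega
    · -- a1 ⊗ y ∈ ZZg 1
      rw [hsum]
      have h1 := tmul_mem_ZZg k (Hdeg_ag1 k) (?_ : (ag k n * y' + q * w') ∈ Hdeg k (j + t' - 1))
        (le_refl 1)
      · have heq2 : 1 + (j + t' - 1) = j + t' := by omega
        rwa [heq2] at h1
      · apply add_mem
        · rcases Nat.eq_zero_or_pos t' with h0 | hpos
          · rw [hy0' h0]; simp
          · have := Hdeg_mul k (Submodule.subset_span (ag_mem_W k n)) hy'
            have heq2 : (n : ℕ) + (t' - 1) = j + t' - 1 := by omega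
            rwa [heq2] at this
        · have := Hdeg_mul k hq hw'
          have heq2 : (j - 1) + t' = j + t' - 1 := by omega
          rwa [heq2] at this
    · -- z ∈ ZZg 2
      rw [hsum]
      have hA : (1 : HA k) ⊗ₜ[k] ag k n ∈ ZZg k 0 j := by
        have := tmul_mem_ZZg k (Submodule.subset_span (one_mem_W k))
          (Submodule.subset_span (ag_mem_W k n)) (le_refl 0)
        rw [zero_add] at this; exact this
      have hB : ag k 1 ⊗ₜ[k] q ∈ ZZg k 1 j := by
        have := tmul_mem_ZZg k (Hdeg_ag1 k) hq (le_refl 1)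
        have heq2 : 1 + (j - 1) = j := by omega
        rwa [heq2] at this
      have hD : (1 : HA k) ⊗ₜ[k] w' ∈ ZZg k 0 t' := by
        have := tmul_mem_ZZg k (Submodule.subset_span (one_mem_W k)) hw' (le_refl 0)
        simpa using this
      have m1 := ZZg_mul k hA hz'
      have m2 := ZZg_mul k hB hty'
      have m3 := ZZg_mono k (show (2:ℕ) ≤ 1 + 2 by omega) (ZZg_mul k hB hz')
      have m4 := ZZg_mul k hzq (add_mem (add_mem hD (ZZg_mono k (show (0:ℕ) ≤ 1 by omega) hty'))
          (ZZg_mono k (show (0:ℕ) ≤ 2 by omega) hz'))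
      have e1 : (0:ℕ) + 2 = 2 := rfl
      have e2 : (1:ℕ) + 1 = 2 := rfl
      have e3 : (2:ℕ) + 0 = 2 := rfl
      rw [e1] at m1
      rw [e2] at m2
      rw [e3] at m4
      exact add_mem (add_mem (add_mem m1 m2) m3) m4
    · -- the equation
      rw [hprod, map_mul, heqq, heq']
      have expand : ∀ A B C D E F : HA k ⊗[k] HA k,
          (A + B + C) * (D + E + F) =
          A * D + (A * E + B * D) + (A * F + B * E + B * F + C * (D + E + F)) := by
        intros; noncomm_ring
      rw [expand]
      rw [Algebra.TensorProduct.tmul_mul_tmul, Algebra.TensorProduct.tmul_mul_tmul,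
        Algebra.TensorProduct.tmul_mul_tmul]
      rw [one_mul, one_mul, mul_one, ← TensorProduct.tmul_add]

lemma projH_one : projH k (1 : HA k) = 0 := by
  simp [projH, Algebra.linearMap_apply]

lemma projH_ag (n : ℕ+) : projH k (ag k n) = ag k n := by
  have : Eha k (ag k n) = 0 := FreeAlgebra.lift_ι_apply _ _
  simp [projH, Algebra.linearMap_apply, this]

lemma deltaH_succ (l : ℕ) :
    deltaH k (l + 1) =
      (TensorProduct.map (projH k) (deltaH k l)) ∘ₗ (Dha k).toLinearMap := by
  unfold deltaH
  show TensorProduct.map (projH k) (projPowH k l) ∘ₗ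
    (TensorProduct.map LinearMap.id (DeltaH k l) ∘ₗ (Dha k).toLinearMap) = _
  rw [← LinearMap.comp_assoc, ← TensorProduct.map_comp]
  simp

lemma zz_kill (l t : ℕ) (ht : t ≤ l + 1)
    (h0 : ∀ e (y : HA k), y ∈ Hdeg k e → e < l → deltaH k l y = 0)
    {z : HA k ⊗[k] HA k} (hz : z ∈ ZZg k 2 t) :
    TensorProduct.map (projH k) (deltaH k l) z = 0 := by
  unfold ZZg at hz
  induction hz using Submodule.span_induction with
  | mem u hu =>
    obtain ⟨d, e, a, b, hde, hd2, ha, hb, rfl⟩ := hu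
    rw [TensorProduct.map_tmul, h0 e b hb (by omega), TensorProduct.tmul_zero]
  | zero => simp
  | add u v _ _ h1 h2 => rw [map_add, h1, h2, add_zero]
  | smul r u _ h1 => rw [map_smul, h1, smul_zero]

lemma delta_succ_word (l : ℕ)
    (h0 : ∀ e (y : HA k), y ∈ Hdeg k e → e < l → deltaH k l y = 0)
    (L : List ℕ) (hpos : ∀ i ∈ L, 0 < i) (hsum : L.sum ≤ l + 1) :
    ∃ y : HA k, y ∈ Hdeg k (L.sum - 1) ∧ Sfun k y = (L.sum : k) ∧
      (L.sum = 0 → y = 0) ∧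
      deltaH k (l + 1) ((L.map (ag' k)).prod) = ag k 1 ⊗ₜ[k] (deltaH k l y) := by
  obtain ⟨y, z, hy, hSy, hy0, _, hz, heq⟩ := Dha_split k L hpos
  refine ⟨y, hy, hSy, hy0, ?_⟩
  rw [deltaH_succ]
  erw [LinearMap.comp_apply]
  erw [heq]
  rw [ map_add, map_add, TensorProduct.map_tmul, TensorProduct.map_tmul,
    projH_one, projH_ag, TensorProduct.zero_tmul, zz_kill k l L.sum hsum h0 hz,
    zero_add, add_zero]

lemma deltaH_zero_apply (x : HA k) : deltaH k 0 x = Eha k x := rfl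

lemma deltaH_main : ∀ (l t : ℕ) (x : HA k), x ∈ Hdeg k t →
    (t < l → deltaH k l x = 0) ∧
    (t = l → deltaH k l x = (l.factorial : k) • (Sfun k x • a1pow k l)) := by
  intro l
  induction l with
  | zero =>
    intro t x hx
    refine ⟨by omega, ?_⟩
    rintro rfl
    rw [deltaH_zero_apply, Hdeg_zero_eha_eq_sfun k hx]
    show Sfun k x = (Nat.factorial 0 : k) • (Sfun k x • (1 : k))
    simp

  | succ l IH =>
    intro t x hx
    have h0 : ∀ e (y : HA k), y ∈ Hdeg k e → e < l → deltaH k l y = 0 :=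
      fun e y hy he => (IH e y hy).1 he
    constructor
    · intro htl
      induction hx using Submodule.span_induction with
      | mem u hu =>
        obtain ⟨L, hLs, hLp, rfl⟩ := hu
        obtain ⟨y, hy, hSy, hy0, heq⟩ := delta_succ_word k l h0 L hLp (by omega)
        rw [heq]
        rcases Nat.eq_zero_or_pos L.sum with hz0 | hzpos
        · rw [hy0 hz0, map_zero, TensorProduct.tmul_zero]; rfl
        · rw [h0 (L.sum - 1) y hy (by omega), TensorProduct.tmul_zero]; rfl
      | zero => simp
      | add u v _ _ h1 h2 => rw [map_add, h1, h2, add_zero]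
      | smul c u _ h1 => rw [map_smul, h1, smul_zero]
    · rintro rfl
      induction hx using Submodule.span_induction with
      | mem u hu =>
        obtain ⟨L, hLs, hLp, rfl⟩ := hu
        obtain ⟨y, hy, hSy, hy0, heq⟩ := delta_succ_word k l h0 L hLp (by omega)
        rw [heq]
        have hyl : y ∈ Hdeg k l := by
          rw [hLs] at hy
          simpa using hy
        have hdy := (IH l y hyl).2 rfl
        rw [hdy, hSy, hLs]
        rw [Sfun_word k ⟨L, hLs, hLp, rfl⟩, one_smul]
        rw [TensorProduct.tmul_smul, TensorProduct.tmul_smul]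
        show (l.factorial : k) • ((l + 1 : ℕ) : k) • (ag k 1 ⊗ₜ[k] a1pow k l)
          = ((l + 1).factorial : k) • a1pow k (l + 1)
        have ha : a1pow k (l + 1) = ag k 1 ⊗ₜ[k] a1pow k l := rfl
        rw [ha, smul_smul, Nat.factorial_succ]
        push_cast
        ring_nf
        rfl
      | zero => simp
      | add u v _ _ h1 h2 =>
        rw [map_add, h1, h2, map_add, add_smul, smul_add]
      | smul c u _ h1 =>
        rw [map_smul, h1, map_smul]
        rw [smul_smul, smul_smul, smul_smul, smul_eq_mul]
        congr 1
        ring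

/-- Tensor power of `Sfun`, used to detect nonvanishing. -/
def Spow : (n : ℕ) → (TpowH k n →ₗ[k] k)
  | 0 => LinearMap.id
  | n + 1 => (TensorProduct.lid k k).toLinearMap ∘ₗ
      TensorProduct.map (Sfun k).toLinearMap (Spow n)

lemma Spow_a1pow (n : ℕ) : Spow k n (a1pow k n) = 1 := by
  induction n with
  | zero => rfl
  | succ n ih =>
    show (TensorProduct.lid k k) (TensorProduct.map (Sfun k).toLinearMap (Spow k n)
      (ag k 1 ⊗ₜ[k] a1pow k n)) = 1
    rw [TensorProduct.map_tmul]
    show (TensorProduct.lid k k) ((Sfun k (ag k 1)) ⊗ₜ[k] (Spow k n (a1pow k n))) = 1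
    rw [Sfun_ag, ih]
    simp


/-- For every `n ≥ 1`, `δ_n(a_n) = n! · a_1^{⊗n}` in `H^{⊗n}`;
in particular `δ_n(a_n) ≠ 0`, while `δ_ℓ(a_n) = 0` for every `ℓ > n`. -/
theorem stmt12 (n : ℕ+) :
    deltaH k n (ag k n) = (n : ℕ).factorial • a1pow k n ∧
    deltaH k n (ag k n) ≠ 0 ∧
    ∀ l : ℕ, (n : ℕ) < l → deltaH k l (ag k n) = 0 := by
  have hmem : ag k n ∈ Hdeg k (n : ℕ) := Submodule.subset_span (ag_mem_W k n)
  have hval : deltaH k (n : ℕ) (ag k n) = (n : ℕ).factorial • a1pow k (n : ℕ) := by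
    have hmain := (deltaH_main k (n : ℕ) (n : ℕ) (ag k n) hmem).2 rfl
    rw [hmain, Sfun_ag, one_smul, Nat.cast_smul_eq_nsmul]
  refine ⟨hval, ?_, ?_⟩
  · rw [hval]
    intro hcontra
    have h2 := congrArg (Spow k (n : ℕ)) hcontra
    rw [map_nsmul, map_zero, Spow_a1pow] at h2
    rw [nsmul_eq_mul, mul_one] at h2
    exact Nat.cast_ne_zero.2 (Nat.factorial_ne_zero (n : ℕ)) h2
  · intro l hl
    exact (deltaH_main k l (n : ℕ) (ag k n) hmem).1 hl
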